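/- Let j ≥ 1 be an integer, let 0 ≤ r < t be real numbers, and let x, y ∈ ℝ. With the conventions (s₀, y₀) = (t, x) and (s_{j+1}, y_{j+1}) = (r, y), the iterated integral satisfies ∫_{r < s_j < ⋯ < s_1 < t} ∫_{ℝ^j} ∏_{k=0}^{j} G_{s_k − s_{k+1}}(y_k − y_{k+1}) dy₁⋯dy_j ds₁⋯ds_j ≤ G_{t−r}(x−y) · (t−r)^{2j} / j!. -/

import Mathlib

open MeasureTheory
open scoped ENNReal

/-- `G_t(x)`, the fundamental solution of the wave equation on `ℝ₊ × ℝ`: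
`G_t(x) = 1/2` if `|x| < t`, and `0` otherwise (in particular `G_t ≡ 0` for `t ≤ 0`). -/
noncomputable def waveG (t x : ℝ) : ℝ := if |x| < t then 1 / 2 else 0

/-- Extension of a chain `s₁, …, s_j` by `s₀ = a` and `s_{j+1} = s_{j+2} = ⋯ = b`. -/
def chainExt (j : ℕ) (a b : ℝ) (s : Fin j → ℝ) : ℕ → ℝ := fun k =>
  if hk : 1 ≤ k ∧ k ≤ j then s ⟨k - 1, by omega⟩ else if k = 0 then a else b

lemma waveG_nonneg (t x : ℝ) : 0 ≤ waveG t x := by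
  unfold waveG; split <;> norm_num

lemma chainExt_zero (j : ℕ) (a b : ℝ) (s : Fin j → ℝ) : chainExt j a b s 0 = a := by
  simp [chainExt]

lemma chainExt_last (j k : ℕ) (a b : ℝ) (s : Fin j → ℝ) (hk : j < k) :
    chainExt j a b s k = b := by
  have h1 : ¬(1 ≤ k ∧ k ≤ j) := by omega
  have h2 : k ≠ 0 := by omega
  simp [chainExt, h1, h2]

lemma chainExt_mid (j k : ℕ) (a b : ℝ) (s : Fin j → ℝ) (h1 : 1 ≤ k) (h2 : k ≤ j) :
    chainExt j a b s k = s ⟨k - 1, by omega⟩ := dif_pos ⟨h1, h2⟩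

lemma tele (f : ℕ → ℝ) : ∀ n, ∀ m, m ≤ n → f m - f n = ∑ k ∈ Finset.Ico m n, (f k - f (k + 1)) := by
  intro n
  induction n with
  | zero =>
    intro m hm
    interval_cases m
    simp
  | succ n ih =>
    intro m hm
    rcases Nat.lt_or_ge m (n + 1) with h | h
    · have hmn : m ≤ n := by omega
      rw [Finset.sum_Ico_succ_top (by omega), ← ih m hmn]; ring
    · have : m = n + 1 := by omega
      subst this; simp

/-- The key pointwise bound on the integrand. -/
lemma pointwise_bound (j : ℕ) (r t x y : ℝ) (s : Fin j → ℝ)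
    (hs2 : ∀ k, r < s k ∧ s k < t) (w : Fin j → ℝ) :
    ∏ k ∈ Finset.range (j + 1),
        waveG (chainExt j t r s k - chainExt j t r s (k + 1))
          (chainExt j x y w k - chainExt j x y w (k + 1))
      ≤ waveG (t - r) (x - y) * ∏ i : Fin j, waveG (t - r) (w i - y) := by
  set d := chainExt j t r s with hd
  set c := chainExt j x y w with hc
  by_cases H : ∀ k ∈ Finset.range (j + 1), |c k - c (k + 1)| < d k - d (k + 1)
  · -- all factors equal 1/2
    have key : ∀ m, m ≤ j → |c m - y| < t - r := by
      intro m hm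
      have hcy : c (j + 1) = y := chainExt_last j (j + 1) x y w (by omega)
      have h1 : |c m - c (j + 1)| ≤ ∑ k ∈ Finset.Ico m (j + 1), |c k - c (k + 1)| := by
        rw [tele c (j + 1) m (by omega)]
        exact Finset.abs_sum_le_sum_abs _ _
      have h2 : ∑ k ∈ Finset.Ico m (j + 1), |c k - c (k + 1)|
          < ∑ k ∈ Finset.Ico m (j + 1), (d k - d (k + 1)) := by
        refine Finset.sum_lt_sum_of_nonempty (by rw [Finset.nonempty_Ico]; omega) ?_
        intro k hk
        exact H k (Finset.mem_range.2 (by have := (Finset.mem_Ico.1 hk).2; omega))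
      have h3 : ∑ k ∈ Finset.Ico m (j + 1), (d k - d (k + 1)) = d m - r := by
        have hdr : d (j + 1) = r := chainExt_last j (j + 1) t r s (by omega)
        rw [← tele d (j + 1) m (by omega), hdr]
      have h4 : d m ≤ t := by
        rcases Nat.eq_zero_or_pos m with h | h
        · subst h; rw [hd, chainExt_zero]
        · rw [hd, chainExt_mid j m t r s h hm]
          exact le_of_lt (hs2 _).2
      rw [hcy] at h1
      linarith
    have hL : ∏ k ∈ Finset.range (j + 1),
        waveG (d k - d (k + 1)) (c k - c (k + 1)) = (1 / 2 : ℝ) ^ (j + 1) := by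
      rw [Finset.prod_congr rfl (fun k hk => ?_), Finset.prod_const, Finset.card_range]
      exact if_pos (H k hk)
    have hx0 : waveG (t - r) (x - y) = 1 / 2 := by
      have h0 : c 0 = x := chainExt_zero j x y w
      have := key 0 (Nat.zero_le _)
      rw [h0] at this
      exact if_pos this
    have hwi : ∀ i : Fin j, waveG (t - r) (w i - y) = 1 / 2 := by
      intro i
      have hci : c (i.val + 1) = w i := by
        rw [hc, chainExt_mid j (i.val + 1) x y w (by omega) (by omega)]
        exact congrArg w (Fin.ext (by simp))
      have := key (i.val + 1) (by omega)
      rw [hci] at this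
      exact if_pos this
    rw [hL, hx0, Finset.prod_congr rfl (fun i _ => hwi i), Finset.prod_const, Finset.card_univ,
      Fintype.card_fin]
    rw [pow_succ]
    ring_nf
    exact le_refl _
  · -- some factor is zero
    push_neg at H
    obtain ⟨k, hk, hk2⟩ := H
    have h0 : waveG (d k - d (k + 1)) (c k - c (k + 1)) = 0 := if_neg (not_lt.2 hk2)
    rw [Finset.prod_eq_zero hk h0]
    exact mul_nonneg (waveG_nonneg _ _) (Finset.prod_nonneg fun i _ => waveG_nonneg _ _)

lemma waveG_shift_eq_indicator (a y : ℝ) :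
    (fun u : ℝ => waveG a (u - y)) = (Set.Ioo (y - a) (y + a)).indicator (fun _ => (1 / 2 : ℝ)) := by
  funext u
  have hiff : (|u - y| < a) ↔ (u ∈ Set.Ioo (y - a) (y + a)) := by
    rw [abs_lt, Set.mem_Ioo]
    constructor <;> intro h <;> constructor <;> linarith [h.1, h.2]
  simp only [waveG, Set.indicator]
  by_cases h : |u - y| < a
  · rw [if_pos h, if_pos (hiff.1 h)]
  · rw [if_neg h, if_neg (fun hm => h (hiff.2 hm))]

lemma waveG_shift_integrable (a y : ℝ) : Integrable (fun u : ℝ => waveG a (u - y)) := by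
  rw [waveG_shift_eq_indicator]
  refine (integrable_indicator_iff measurableSet_Ioo).2 ?_
  exact integrableOn_const (by rw [Real.volume_Ioo]; exact ENNReal.ofReal_ne_top)

lemma waveG_shift_integral (a y : ℝ) (ha : 0 ≤ a) : ∫ u : ℝ, waveG a (u - y) = a := by
  rw [waveG_shift_eq_indicator, integral_indicator_const _ measurableSet_Ioo, measureReal_def, Real.volume_Ioo,
    ENNReal.toReal_ofReal (by linarith)]
  rw [smul_eq_mul]
  ring

/-- The bound on the inner integral. -/
lemma inner_bound (j : ℕ) (r t x y : ℝ) (hrt : r < t) (s : Fin j → ℝ)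
    (hs2 : ∀ k, r < s k ∧ s k < t) :
    (∫ w : Fin j → ℝ,
        ∏ k ∈ Finset.range (j + 1),
          waveG (chainExt j t r s k - chainExt j t r s (k + 1))
            (chainExt j x y w k - chainExt j x y w (k + 1)))
      ≤ waveG (t - r) (x - y) * (t - r) ^ j := by
  have hgint : Integrable
      (fun w : Fin j → ℝ => waveG (t - r) (x - y) * ∏ i : Fin j, waveG (t - r) (w i - y)) := by
    exact (Integrable.fintype_prod (f := fun (_ : Fin j) (u : ℝ) => waveG (t - r) (u - y))
      (fun i => waveG_shift_integrable _ _)).const_mul _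
  calc (∫ w : Fin j → ℝ,
        ∏ k ∈ Finset.range (j + 1),
          waveG (chainExt j t r s k - chainExt j t r s (k + 1))
            (chainExt j x y w k - chainExt j x y w (k + 1)))
      ≤ ∫ w : Fin j → ℝ, waveG (t - r) (x - y) * ∏ i : Fin j, waveG (t - r) (w i - y) := by
        refine integral_mono_of_nonneg ?_ hgint ?_
        · exact Filter.Eventually.of_forall fun w =>
            Finset.prod_nonneg fun k _ => waveG_nonneg _ _
        · exact Filter.Eventually.of_forall fun w => pointwise_bound j r t x y s hs2 w
    _ = waveG (t - r) (x - y) * (t - r) ^ j := by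
        rw [MeasureTheory.integral_const_mul]
        congr 1
        rw [MeasureTheory.integral_fintype_prod_volume_eq_pow (ι := Fin j)
          (fun u : ℝ => waveG (t - r) (u - y)),
          waveG_shift_integral (t - r) y (by linarith), Fintype.card_fin]

lemma simplex_measurable (j : ℕ) (r t : ℝ) :
    MeasurableSet {s : Fin j → ℝ | (∀ k l : Fin j, k < l → s l < s k) ∧ ∀ k, r < s k ∧ s k < t} := by
  have h1 : MeasurableSet {s : Fin j → ℝ | ∀ k l : Fin j, k < l → s l < s k} := by
    rw [Set.setOf_forall]
    refine MeasurableSet.iInter fun k => ?_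
    rw [Set.setOf_forall]
    refine MeasurableSet.iInter fun l => ?_
    by_cases hkl : k < l
    · simp only [hkl, true_implies]
      exact measurableSet_lt (measurable_pi_apply l) (measurable_pi_apply k)
    · simp [hkl]
  have h2 : MeasurableSet {s : Fin j → ℝ | ∀ k, r < s k ∧ s k < t} := by
    rw [Set.setOf_forall]
    refine MeasurableSet.iInter fun k => ?_
    exact (measurableSet_lt measurable_const (measurable_pi_apply k)).inter
      (measurableSet_lt (measurable_pi_apply k) measurable_const)
  exact h1.inter h2

lemma perm_eq_of_chains {j : ℕ} {s : Fin j → ℝ} {σ τ : Equiv.Perm (Fin j)}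
    (hσ : ∀ k l : Fin j, k < l → s (σ l) < s (σ k))
    (hτ : ∀ k l : Fin j, k < l → s (τ l) < s (τ k)) : σ = τ := by
  have hσ' : StrictAnti (fun k => s (σ k)) := fun k l h => hσ k l h
  have hτ' : StrictAnti (fun k => s (τ k)) := fun k l h => hτ k l h
  have hrange : ∀ π : Equiv.Perm (Fin j),
      Set.range (fun k => s (π k)) = Set.range s := fun π => π.surjective.range_comp s
  have heq : (fun k => s (σ k)) = (fun k => s (τ k)) :=
    (hσ'.range_inj hτ').1 (by rw [hrange, hrange])
  have hsinj : Function.Injective s := by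
    have h1 : Function.Injective (fun k => s (σ k)) := hσ'.injective
    intro a b hab
    have h2 : (fun k => s (σ k)) (σ.symm a) = (fun k => s (σ k)) (σ.symm b) := by
      simp [hab]
    have h3 := h1 h2
    simpa using congrArg σ h3
  exact Equiv.ext fun k => hsinj (congrFun heq k)

lemma simplex_vol (j : ℕ) (r t : ℝ) (hrt : r < t) :
    (volume {s : Fin j → ℝ | (∀ k l : Fin j, k < l → s l < s k) ∧ ∀ k, r < s k ∧ s k < t}).toReal
      ≤ (t - r) ^ j / (Nat.factorial j) := by
  set A := {s : Fin j → ℝ | (∀ k l : Fin j, k < l → s l < s k) ∧ ∀ k, r < s k ∧ s k < t} with hAdef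
  have hA : MeasurableSet A := simplex_measurable j r t
  set e : Equiv.Perm (Fin j) → ((Fin j → ℝ) ≃ᵐ (Fin j → ℝ)) :=
    fun σ => MeasurableEquiv.piCongrLeft (fun _ : Fin j => ℝ) σ with he
  have happ : ∀ (σ : Equiv.Perm (Fin j)) (s : Fin j → ℝ), (e σ) s = s ∘ σ.symm := by
    intro σ s
    funext i
    have h := Equiv.piCongrLeft_apply_apply (fun _ : Fin j => ℝ) σ s (σ.symm i)
    rw [Equiv.apply_symm_apply] at h
    exact h
  set Aσ : Equiv.Perm (Fin j) → Set (Fin j → ℝ) := fun σ => (e σ) ⁻¹' A with hAσ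
  have hvol : ∀ σ, volume (Aσ σ) = volume A := by
    intro σ
    exact (MeasureTheory.volume_measurePreserving_piCongrLeft (fun _ : Fin j => ℝ)
      σ).measure_preimage hA.nullMeasurableSet
  have hmem : ∀ σ s, s ∈ Aσ σ ↔ ((∀ k l : Fin j, k < l → s (σ.symm l) < s (σ.symm k)) ∧
      ∀ k, r < s (σ.symm k) ∧ s (σ.symm k) < t) := by
    intro σ s
    rw [hAσ]
    simp only [Set.mem_preimage, happ σ s, hAdef, Set.mem_setOf_eq, Function.comp]
  have hdisj : Pairwise (Function.onFun Disjoint Aσ) := by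
    intro σ τ hne
    rw [Function.onFun, Set.disjoint_left]
    intro s hsσ hsτ
    have h1 := (hmem σ s).1 hsσ
    have h2 := (hmem τ s).1 hsτ
    exact hne (by
      have := perm_eq_of_chains h1.1 h2.1
      have : σ.symm = τ.symm := this
      calc σ = (σ.symm).symm := rfl
        _ = (τ.symm).symm := by rw [this]
        _ = τ := rfl)
  have hsub : ∀ σ, Aσ σ ⊆ Set.pi Set.univ fun _ : Fin j => Set.Ioo r t := by
    intro σ s hs
    have h2 := ((hmem σ s).1 hs).2
    intro i _
    have := h2 (σ i)
    rw [Equiv.symm_apply_apply] at this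
    exact this
  have hbox : volume (Set.pi Set.univ fun _ : Fin j => Set.Ioo r t)
      = (ENNReal.ofReal (t - r)) ^ j := by
    rw [volume_pi_pi]
    simp [Real.volume_Ioo]
  have hunion : (Nat.factorial j : ℝ≥0∞) * volume A ≤ (ENNReal.ofReal (t - r)) ^ j := by
    have h1 : volume (⋃ σ, Aσ σ) = ∑' σ : Equiv.Perm (Fin j), volume (Aσ σ) :=
      measure_iUnion hdisj fun σ => (e σ).measurable hA
    have h2 : ∑' σ : Equiv.Perm (Fin j), volume (Aσ σ) = (Nat.factorial j : ℝ≥0∞) * volume A := by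
      rw [tsum_fintype]
      rw [Finset.sum_congr rfl fun σ _ => hvol σ, Finset.sum_const, Finset.card_univ,
        Fintype.card_perm, Fintype.card_fin, nsmul_eq_mul]
    rw [← h2, ← h1, ← hbox]
    exact measure_mono (Set.iUnion_subset hsub)
  have hne : (ENNReal.ofReal (t - r)) ^ j ≠ ⊤ := by
    exact ENNReal.pow_ne_top ENNReal.ofReal_ne_top
  have hkey := ENNReal.toReal_mono hne hunion
  rw [ENNReal.toReal_mul, ENNReal.toReal_natCast, ENNReal.toReal_pow,
    ENNReal.toReal_ofReal (by linarith)] at hkey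
  have hfac : (0:ℝ) < (Nat.factorial j : ℝ) := Nat.cast_pos.2 (Nat.factorial_pos j)
  rw [le_div_iff₀ hfac]
  linarith

/-- with the conventions `(s₀,y₀) = (t,x)` and `(s_{j+1},y_{j+1}) = (r,y)`,
`∫_{r<s_j<⋯<s_1<t} ∫_{ℝ^j} ∏_{k=0}^{j} G_{s_k−s_{k+1}}(y_k−y_{k+1}) dy ds
  ≤ G_{t−r}(x−y)·(t−r)^{2j}/j!`. -/
theorem stmt11 (j : ℕ) (hj : 1 ≤ j) (r t x y : ℝ) (hr : 0 ≤ r) (hrt : r < t) :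
    (∫ s in {s : Fin j → ℝ | (∀ k l : Fin j, k < l → s l < s k) ∧ ∀ k, r < s k ∧ s k < t},
      ∫ w : Fin j → ℝ,
        ∏ k ∈ Finset.range (j + 1),
          waveG (chainExt j t r s k - chainExt j t r s (k + 1))
            (chainExt j x y w k - chainExt j x y w (k + 1)))
      ≤ waveG (t - r) (x - y) * (t - r) ^ (2 * j) / (Nat.factorial j) := by
  set A := {s : Fin j → ℝ | (∀ k l : Fin j, k < l → s l < s k) ∧ ∀ k, r < s k ∧ s k < t} with hAdef
  have hA : MeasurableSet A := simplex_measurable j r t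
  set C : ℝ := waveG (t - r) (x - y) * (t - r) ^ j with hC
  have hC0 : 0 ≤ C := mul_nonneg (waveG_nonneg _ _) (pow_nonneg (by linarith) j)
  have hAfin : volume A < ⊤ := by
    have hsub : A ⊆ Set.pi Set.univ fun _ : Fin j => Set.Ioo r t := by
      intro s hs i _
      exact Set.mem_Ioo.2 (hs.2 i)
    refine lt_of_le_of_lt (measure_mono hsub) ?_
    rw [volume_pi_pi]
    simp only [Real.volume_Ioo, Finset.prod_const, Finset.card_univ, Fintype.card_fin]
    exact ENNReal.pow_lt_top ENNReal.ofReal_lt_top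
  calc (∫ s in A,
      ∫ w : Fin j → ℝ,
        ∏ k ∈ Finset.range (j + 1),
          waveG (chainExt j t r s k - chainExt j t r s (k + 1))
            (chainExt j x y w k - chainExt j x y w (k + 1)))
      ≤ ∫ _ in A, C := by
        refine integral_mono_of_nonneg ?_ (integrableOn_const hAfin.ne) ?_
        · exact Filter.Eventually.of_forall fun s =>
            integral_nonneg fun w => Finset.prod_nonneg fun k _ => waveG_nonneg _ _
        · refine (ae_restrict_iff' hA).2 (Filter.Eventually.of_forall fun s hs => ?_)
          exact inner_bound j r t x y hrt s hs.2
    _ = (volume A).toReal • C := setIntegral_const C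
    _ ≤ ((t - r) ^ j / (Nat.factorial j)) * C := by
        rw [smul_eq_mul]
        exact mul_le_mul_of_nonneg_right (simplex_vol j r t hrt) hC0
    _ = waveG (t - r) (x - y) * (t - r) ^ (2 * j) / (Nat.factorial j) := by
        rw [hC, two_mul, pow_add]
        ring
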